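/- Consider osp(2|2(n-1)) realized as block matrices X = [[b,0,x,y],[0,-b,z,w],[wᵀ,yᵀ,A,B],[-zᵀ,-xᵀ,C,D]] (with the constraints making X ∈ osp). The map σ sending X to [[-conj b, 0, -i·conj w, i·conj z],[0, conj b, i·conj y, -i·conj x],[-i·conj(x)ᵀ, i·conj(z)ᵀ, -conj(A)ᵀ, -conj C],[-i·conj(y)ᵀ, i·conj(w)ᵀ, -conj(B)ᵀ, conj A]] is an antilinear, parity-preserving map with σ² = id that preserves the super Lie bracket; i.e., σ is a standard real structure on osp(2|2(n-1)). -/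
import Mathlib


noncomputable section

namespace OspReal

variable (n : ℕ)

/-- Index type for `osp(2|2(n-1))`: even indices `Fin 2`, odd indices
`Fin (n-1) ⊕ Fin (n-1)`. -/
abbrev I (n : ℕ) := Fin 2 ⊕ (Fin (n - 1) ⊕ Fin (n - 1))

open Complex in
/-- The map σ of formula (6.6): `X = [[b,0,x,y],[0,-b,z,w],[wᵀ,yᵀ,A,B],[-zᵀ,-xᵀ,C,D]]`
goes to `[[-conj b, 0, -i·conj w, i·conj z],[0, conj b, i·conj y, -i·conj x],
[-i·conj(x)ᵀ, i·conj(z)ᵀ, -conj(A)ᵀ, -conj C],[-i·conj(y)ᵀ, i·conj(w)ᵀ, -conj(B)ᵀ, conj A]]`,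
written entrywise. -/
def ospSigma (X : Matrix (I n) (I n) ℂ) : Matrix (I n) (I n) ℂ :=
  fun p q =>
    match p, q with
    | .inl i, .inl j => - (starRingEnd ℂ) (X (.inl i) (.inl j))
    | .inl i, .inr (.inl j) =>
        (if i = 0 then -Complex.I else Complex.I) *
          (starRingEnd ℂ) (X (.inl (1 - i)) (.inr (.inr j)))
    | .inl i, .inr (.inr j) =>
        (if i = 0 then Complex.I else -Complex.I) *
          (starRingEnd ℂ) (X (.inl (1 - i)) (.inr (.inl j)))
    | .inr (.inl k), .inl i =>
        (if i = 0 then -Complex.I else Complex.I) *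
          (starRingEnd ℂ) (X (.inl i) (.inr (.inl k)))
    | .inr (.inr k), .inl i =>
        (if i = 0 then -Complex.I else Complex.I) *
          (starRingEnd ℂ) (X (.inl i) (.inr (.inr k)))
    | .inr (.inl i), .inr (.inl j) => - (starRingEnd ℂ) (X (.inr (.inl j)) (.inr (.inl i)))
    | .inr (.inl i), .inr (.inr j) => - (starRingEnd ℂ) (X (.inr (.inr i)) (.inr (.inl j)))
    | .inr (.inr i), .inr (.inl j) => - (starRingEnd ℂ) (X (.inr (.inl j)) (.inr (.inr i)))
    | .inr (.inr i), .inr (.inr j) => (starRingEnd ℂ) (X (.inr (.inl i)) (.inr (.inl j)))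

/-- Membership in `osp(2|2(n-1))` in the block form
`X = [[b,0,x,y],[0,-b,z,w],[wᵀ,yᵀ,A,B],[-zᵀ,-xᵀ,C,D]]` with `B = Bᵀ`, `C = Cᵀ`,
`D = -Aᵀ`. -/
def InOsp (X : Matrix (I n) (I n) ℂ) : Prop :=
  X (.inl 0) (.inl 1) = 0 ∧ X (.inl 1) (.inl 0) = 0 ∧
  X (.inl 1) (.inl 1) = - X (.inl 0) (.inl 0) ∧
  (∀ k, X (.inr (.inl k)) (.inl 0) = X (.inl 1) (.inr (.inr k))) ∧
  (∀ k, X (.inr (.inl k)) (.inl 1) = X (.inl 0) (.inr (.inr k))) ∧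
  (∀ k, X (.inr (.inr k)) (.inl 0) = - X (.inl 1) (.inr (.inl k))) ∧
  (∀ k, X (.inr (.inr k)) (.inl 1) = - X (.inl 0) (.inr (.inl k))) ∧
  (∀ i j, X (.inr (.inl i)) (.inr (.inr j)) = X (.inr (.inl j)) (.inr (.inr i))) ∧
  (∀ i j, X (.inr (.inr i)) (.inr (.inl j)) = X (.inr (.inr j)) (.inr (.inl i))) ∧
  (∀ i j, X (.inr (.inr i)) (.inr (.inr j)) = - X (.inr (.inl j)) (.inr (.inl i)))

/-- Even (block-diagonal) matrices. -/
def IsEvenM (X : Matrix (I n) (I n) ℂ) : Prop :=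
  (∀ i k, X (.inl i) (.inr k) = 0) ∧ (∀ k i, X (.inr k) (.inl i) = 0)

/-- Odd (block-antidiagonal) matrices. -/
def IsOddM (X : Matrix (I n) (I n) ℂ) : Prop :=
  (∀ i j, X (.inl i) (.inl j) = 0) ∧ (∀ k l, X (.inr k) (.inr l) = 0)

def tau : I n → I n
  | .inl i => .inl (1 - i)
  | .inr (.inl k) => .inr (.inr k)
  | .inr (.inr k) => .inr (.inl k)

lemma tau_tau (p : I n) : tau n (tau n p) = p := by
  rcases p with i | k | k
  · fin_cases i <;> rfl
  · rfl
  · rfl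

def tauE : I n ≃ I n := ⟨tau n, tau n, tau_tau n, tau_tau n⟩

def al : I n → ℂ
  | .inl i => if i = 0 then 1 else -1
  | .inr (.inl _) => Complex.I
  | .inr (.inr _) => -Complex.I

lemma al_mul_conj_al (p : I n) : al n p * (starRingEnd ℂ) (al n p) = 1 := by
  rcases p with i | k | k
  · fin_cases i <;> simp [al]
  · simp [al, Complex.mul_conj']
  · simp [al]

def ee : I n → ℂ
  | .inl _ => 1
  | .inr (.inl _) => 1
  | .inr (.inr _) => -1

def ff : I n → ℂ
  | .inl _ => -1
  | .inr (.inl _) => -1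
  | .inr (.inr _) => 1

def ff' : I n → ℂ
  | .inl _ => 1
  | .inr (.inl _) => -1
  | .inr (.inr _) => 1

lemma ee_mul_ff (p : I n) : ee n p * ff n p = -1 := by
  rcases p with i | k | k <;> simp [ee, ff]

/-- even-type symmetry condition -/
def CE (X : Matrix (I n) (I n) ℂ) : Prop :=
  ∀ u v, X u v = ee n u * ff n v * X (tau n v) (tau n u)

/-- odd-type symmetry condition -/
def CO (X : Matrix (I n) (I n) ℂ) : Prop :=
  ∀ u v, X u v = ee n u * ff' n v * X (tau n v) (tau n u)

/-- generic product transform: first factor satisfies CE, second factor a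
condition with column coefficient `g`. -/
lemma prodT (g : I n → ℂ) (X Y : Matrix (I n) (I n) ℂ) (hX : CE n X)
    (hY : ∀ u v, Y u v = ee n u * g v * Y (tau n v) (tau n u)) (u v : I n) :
    (X * Y) u v = -(ee n u * g v) * (Y * X) (tau n v) (tau n u) := by
  rw [Matrix.mul_apply, Matrix.mul_apply]
  rw [← Equiv.sum_comp (tauE n) (fun r => Y (tau n v) r * X r (tau n u))]
  rw [Finset.mul_sum]
  refine Finset.sum_congr rfl fun r _ => ?_
  rw [hX u r, hY r v]
  have h1 := ee_mul_ff n r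
  show _ = -(ee n u * g v) * (Y (tau n v) (tauE n r) * X (tauE n r) (tau n u))
  show _ = -(ee n u * g v) * (Y (tau n v) (tau n r) * X (tau n r) (tau n u))
  linear_combination (ee n u * g v * X (tau n r) (tau n u) * Y (tau n v) (tau n r)) * h1

lemma prodOE (X Y : Matrix (I n) (I n) ℂ) (hX : CE n X) (heX : IsEvenM n X)
    (hY : CO n Y) (u v : I n) :
    (Y * X) u v = -(ee n u * ff' n v) * (X * Y) (tau n v) (tau n u) := by
  rw [Matrix.mul_apply, Matrix.mul_apply,
    ← Equiv.sum_comp (tauE n) (fun r => X (tau n v) r * Y r (tau n u)),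
    Finset.mul_sum]
  refine Finset.sum_congr rfl fun r _ => ?_
  show Y u r * X r v = -(ee n u * ff' n v) * (X (tau n v) (tau n r) * Y (tau n r) (tau n u))
  rcases r with i | k | k <;> rcases v with j | m | m
  all_goals first
    | (simp [tau, heX.1, heX.2]; done)
    | (rw [hY u _, hX _ _]; simp only [ee, ff, ff']; ring)

lemma prodOO (X Y : Matrix (I n) (I n) ℂ) (hX : CO n X) (hY : CO n Y)
    (hoY : IsOddM n Y) (u v : I n) :
    (X * Y) u v = (ee n u * ff n v) * (Y * X) (tau n v) (tau n u) := by
  rw [Matrix.mul_apply, Matrix.mul_apply,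
    ← Equiv.sum_comp (tauE n) (fun r => Y (tau n v) r * X r (tau n u)),
    Finset.mul_sum]
  refine Finset.sum_congr rfl fun r _ => ?_
  show X u r * Y r v = (ee n u * ff n v) * (Y (tau n v) (tau n r) * X (tau n r) (tau n u))
  rcases r with i | k | k <;> rcases v with j | m | m
  all_goals first
    | (simp [tau, hoY.1, hoY.2]; done)
    | (rw [hX u _, hY _ _]; simp only [ee, ff, ff']; ring)

@[simp] lemma tau_inl (i : Fin 2) : tau n (.inl i) = .inl (1 - i) := rfl
@[simp] lemma tau_inl0 : tau n (.inl 0) = .inl 1 := rfl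
@[simp] lemma tau_inl1 : tau n (.inl 1) = .inl 0 := rfl
@[simp] lemma tau_irl (k : Fin (n-1)) : tau n (.inr (.inl k)) = .inr (.inr k) := rfl
@[simp] lemma tau_irr (k : Fin (n-1)) : tau n (.inr (.inr k)) = .inr (.inl k) := rfl

lemma CE_of (X : Matrix (I n) (I n) ℂ) (hX : InOsp n X) (he : IsEvenM n X) : CE n X := by
  obtain ⟨h1, h2, h3, h4, h5, h6, h7, h8, h9, h10⟩ := hX
  intro u v
  rcases u with i | k | k <;> rcases v with j | m | m
  · fin_cases i <;> fin_cases j <;> simp [ee, ff, h1, h2, h3]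
  · simp [ee, ff, he.1, he.2]
  · simp [ee, ff, he.1, he.2]
  · simp [ee, ff, he.1, he.2]
  · simp [ee, ff, h10 m k]
  · simpa [ee, ff] using h8 k m
  · simp [ee, ff, he.1, he.2]
  · simpa [ee, ff] using h9 k m
  · simp [ee, ff, h10 k m]

lemma CO_of (X : Matrix (I n) (I n) ℂ) (hX : InOsp n X) (ho : IsOddM n X) : CO n X := by
  obtain ⟨h1, h2, h3, h4, h5, h6, h7, h8, h9, h10⟩ := hX
  intro u v
  rcases u with i | k | k <;> rcases v with j | m | m
  · simp [ee, ff', ho.1]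
  · fin_cases i <;> simp [ee, ff', h6 m, h7 m]
  · fin_cases i <;> simp [ee, ff', ← h4 m, ← h5 m]
  · fin_cases j <;> simp [ee, ff', h4 k, h5 k]
  · simp [ee, ff', ho.2]
  · simp [ee, ff', ho.2]
  · fin_cases j <;> simp [ee, ff', h6 k, h7 k]
  · simp [ee, ff', ho.2]
  · simp [ee, ff', ho.2]

lemma inOsp_of_CE (X : Matrix (I n) (I n) ℂ) (hC : CE n X) (he : IsEvenM n X) :
    InOsp n X := by
  refine ⟨?_, ?_, ?_, fun k => ?_, fun k => ?_, fun k => ?_, fun k => ?_,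
    fun i j => ?_, fun i j => ?_, fun i j => ?_⟩
  · have h := hC (.inl 0) (.inl 1); simp [ee, ff] at h
    linear_combination h / 2
  · have h := hC (.inl 1) (.inl 0); simp [ee, ff] at h
    linear_combination h / 2
  · have h := hC (.inl 1) (.inl 1); simpa [ee, ff] using h
  · simp [he.1, he.2]
  · simp [he.1, he.2]
  · simp [he.1, he.2]
  · simp [he.1, he.2]
  · have h := hC (.inr (.inl i)) (.inr (.inr j)); simpa [ee, ff] using h
  · have h := hC (.inr (.inr i)) (.inr (.inl j)); simpa [ee, ff] using h
  · have h := hC (.inr (.inr i)) (.inr (.inr j)); simpa [ee, ff] using h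

lemma inOsp_of_CO (X : Matrix (I n) (I n) ℂ) (hC : CO n X) (ho : IsOddM n X) :
    InOsp n X := by
  refine ⟨?_, ?_, ?_, fun k => ?_, fun k => ?_, fun k => ?_, fun k => ?_,
    fun i j => ?_, fun i j => ?_, fun i j => ?_⟩
  · simp [ho.1]
  · simp [ho.1]
  · simp [ho.1]
  · have h := hC (.inr (.inl k)) (.inl 0); simpa [ee, ff'] using h
  · have h := hC (.inr (.inl k)) (.inl 1); simpa [ee, ff'] using h
  · have h := hC (.inr (.inr k)) (.inl 0); simpa [ee, ff'] using h
  · have h := hC (.inr (.inr k)) (.inl 1); simpa [ee, ff'] using h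
  · simp [ho.2]
  · simp [ho.2]
  · simp [ho.2]

lemma even_mul_even {X Y : Matrix (I n) (I n) ℂ} (hX : IsEvenM n X) (hY : IsEvenM n Y) :
    IsEvenM n (X * Y) := by
  constructor <;> intro a b <;> rw [Matrix.mul_apply] <;>
    refine Finset.sum_eq_zero fun r _ => ?_ <;>
    rcases r with j | m | m <;> simp [hX.1, hX.2, hY.1, hY.2]

lemma even_mul_odd {X Y : Matrix (I n) (I n) ℂ} (hX : IsEvenM n X) (hY : IsOddM n Y) :
    IsOddM n (X * Y) := by
  constructor <;> intro a b <;> rw [Matrix.mul_apply] <;>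
    refine Finset.sum_eq_zero fun r _ => ?_ <;>
    rcases r with j | m | m <;> simp [hX.1, hX.2, hY.1, hY.2]

lemma odd_mul_even {X Y : Matrix (I n) (I n) ℂ} (hX : IsOddM n X) (hY : IsEvenM n Y) :
    IsOddM n (X * Y) := by
  constructor <;> intro a b <;> rw [Matrix.mul_apply] <;>
    refine Finset.sum_eq_zero fun r _ => ?_ <;>
    rcases r with j | m | m <;> simp [hX.1, hX.2, hY.1, hY.2]

lemma odd_mul_odd {X Y : Matrix (I n) (I n) ℂ} (hX : IsOddM n X) (hY : IsOddM n Y) :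
    IsEvenM n (X * Y) := by
  constructor <;> intro a b <;> rw [Matrix.mul_apply] <;>
    refine Finset.sum_eq_zero fun r _ => ?_ <;>
    rcases r with j | m | m <;> simp [hX.1, hX.2, hY.1, hY.2]

lemma evenM_sub {X Y : Matrix (I n) (I n) ℂ} (hX : IsEvenM n X) (hY : IsEvenM n Y) :
    IsEvenM n (X - Y) := by
  exact ⟨fun i k => by simp [Matrix.sub_apply, hX.1, hY.1],
    fun k i => by simp [Matrix.sub_apply, hX.2, hY.2]⟩

lemma oddM_sub {X Y : Matrix (I n) (I n) ℂ} (hX : IsOddM n X) (hY : IsOddM n Y) :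
    IsOddM n (X - Y) := by
  exact ⟨fun i k => by simp [Matrix.sub_apply, hX.1, hY.1],
    fun k i => by simp [Matrix.sub_apply, hX.2, hY.2]⟩

lemma evenM_add {X Y : Matrix (I n) (I n) ℂ} (hX : IsEvenM n X) (hY : IsEvenM n Y) :
    IsEvenM n (X + Y) := by
  exact ⟨fun i k => by simp [Matrix.add_apply, hX.1, hY.1],
    fun k i => by simp [Matrix.add_apply, hX.2, hY.2]⟩

lemma closure_ee {X Y : Matrix (I n) (I n) ℂ} (hX : InOsp n X) (hY : InOsp n Y)
    (heX : IsEvenM n X) (heY : IsEvenM n Y) : InOsp n (X * Y - Y * X) := by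
  have hCX := CE_of n X hX heX
  have hCY := CE_of n Y hY heY
  refine inOsp_of_CE n _ (fun u v => ?_)
    (evenM_sub n (even_mul_even n heX heY) (even_mul_even n heY heX))
  have p1 := prodT n (ff n) X Y hCX hCY u v
  have p2 := prodT n (ff n) Y X hCY hCX u v
  simp only [Matrix.sub_apply]
  linear_combination p1 - p2

lemma closure_eo {X Y : Matrix (I n) (I n) ℂ} (hX : InOsp n X) (hY : InOsp n Y)
    (heX : IsEvenM n X) (hoY : IsOddM n Y) : InOsp n (X * Y - Y * X) := by
  have hCX := CE_of n X hX heX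
  have hCY := CO_of n Y hY hoY
  refine inOsp_of_CO n _ (fun u v => ?_)
    (oddM_sub n (even_mul_odd n heX hoY) (odd_mul_even n hoY heX))
  have p1 := prodT n (ff' n) X Y hCX hCY u v
  have p2 := prodOE n X Y hCX heX hCY u v
  simp only [Matrix.sub_apply]
  linear_combination p1 - p2

lemma closure_oe {X Y : Matrix (I n) (I n) ℂ} (hX : InOsp n X) (hY : InOsp n Y)
    (hoX : IsOddM n X) (heY : IsEvenM n Y) : InOsp n (X * Y - Y * X) := by
  have hCX := CO_of n X hX hoX
  have hCY := CE_of n Y hY heY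
  refine inOsp_of_CO n _ (fun u v => ?_)
    (oddM_sub n (odd_mul_even n hoX heY) (even_mul_odd n heY hoX))
  have p1 := prodOE n Y X hCY heY hCX u v
  have p2 := prodT n (ff' n) Y X hCY hCX u v
  simp only [Matrix.sub_apply]
  linear_combination p1 - p2

lemma closure_oo {X Y : Matrix (I n) (I n) ℂ} (hX : InOsp n X) (hY : InOsp n Y)
    (hoX : IsOddM n X) (hoY : IsOddM n Y) : InOsp n (X * Y + Y * X) := by
  have hCX := CO_of n X hX hoX
  have hCY := CO_of n Y hY hoY
  refine inOsp_of_CE n _ (fun u v => ?_)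
    (evenM_add n (odd_mul_odd n hoX hoY) (odd_mul_odd n hoY hoX))
  have p1 := prodOO n X Y hCX hCY hoY u v
  have p2 := prodOO n Y X hCY hCX hoX u v
  simp only [Matrix.add_apply]
  linear_combination p1 + p2

def sigma' (X : Matrix (I n) (I n) ℂ) : Matrix (I n) (I n) ℂ :=
  fun p q => al n p * (starRingEnd ℂ) (al n q) * (starRingEnd ℂ) (X (tau n p) (tau n q))

@[simp] lemma fin2_sub_zero : (1 - 0 : Fin 2) = 1 := rfl
@[simp] lemma fin2_sub_one : (1 - 1 : Fin 2) = 0 := rfl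

lemma sigma_eq (X : Matrix (I n) (I n) ℂ) (hX : InOsp n X) :
    ospSigma n X = sigma' n X := by
  obtain ⟨h1, h2, h3, h4, h5, h6, h7, h8, h9, h10⟩ := hX
  funext p q
  rcases p with i | k | k <;> rcases q with j | m | m
  · fin_cases i <;> fin_cases j <;>
      simp [ospSigma, sigma', al, h1, h2, h3] <;> ring
  · fin_cases i <;> simp [ospSigma, sigma', al] <;> ring
  · fin_cases i <;> simp [ospSigma, sigma', al] <;> ring
  · fin_cases j <;> simp [ospSigma, sigma', al, h6 k, h7 k] <;> ring
  · simp [ospSigma, sigma', al, h10 k m] <;> ring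
  · simp [ospSigma, sigma', al] <;> ring
  · fin_cases j <;> simp [ospSigma, sigma', al, h4 k, h5 k] <;> ring
  · simp [ospSigma, sigma', al, h8 k m] <;> ring
  · simp [ospSigma, sigma', al] <;> ring

lemma sigma'_mul (X Y : Matrix (I n) (I n) ℂ) :
    sigma' n (X * Y) = sigma' n X * sigma' n Y := by
  funext p q
  show al n p * (starRingEnd ℂ) (al n q) * (starRingEnd ℂ) ((X * Y) (tau n p) (tau n q)) = _
  rw [Matrix.mul_apply, Matrix.mul_apply,
    ← Equiv.sum_comp (tauE n) (fun r => X (tau n p) r * Y r (tau n q)),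
    map_sum, Finset.mul_sum]
  refine Finset.sum_congr rfl fun r _ => ?_
  have h1 := al_mul_conj_al n r
  show al n p * (starRingEnd ℂ) (al n q) *
      (starRingEnd ℂ) (X (tau n p) (tau n r) * Y (tau n r) (tau n q)) =
    sigma' n X p r * sigma' n Y r q
  simp only [sigma', map_mul]
  linear_combination (-(al n p * (starRingEnd ℂ) (al n q) *
    ((starRingEnd ℂ) (X (tau n p) (tau n r)) * (starRingEnd ℂ) (Y (tau n r) (tau n q))))) * h1

lemma sigma'_invol (X : Matrix (I n) (I n) ℂ) : sigma' n (sigma' n X) = X := by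
  funext p q
  show al n p * (starRingEnd ℂ) (al n q) * (starRingEnd ℂ) (sigma' n X (tau n p) (tau n q)) = _
  simp only [sigma', map_mul, tau_tau, Complex.conj_conj]
  rcases p with i | k | k <;> rcases q with j | m | m <;>
    [ (fin_cases i <;> fin_cases j); fin_cases i; fin_cases i;
      fin_cases j; skip; skip; fin_cases j; skip; skip ] <;>
    (simp [al]; try ring_nf; try simp [Complex.I_sq])

lemma osp_sigma (X : Matrix (I n) (I n) ℂ) (hX : InOsp n X) : InOsp n (ospSigma n X) := by
  obtain ⟨h1, h2, h3, h4, h5, h6, h7, h8, h9, h10⟩ := hX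
  refine ⟨?_, ?_, ?_, fun k => ?_, fun k => ?_, fun k => ?_, fun k => ?_,
    fun i j => ?_, fun i j => ?_, fun i j => ?_⟩
  · simp [ospSigma, h1]
  · simp [ospSigma, h2]
  · simp [ospSigma, h3]
  · simp [ospSigma]
  · simp [ospSigma]
  · simp [ospSigma]
  · simp [ospSigma]
  · simp [ospSigma, h9 i j]
  · simp [ospSigma, h8 i j]
  · simp [ospSigma]

lemma sigma_add (X Y : Matrix (I n) (I n) ℂ) :
    ospSigma n (X + Y) = ospSigma n X + ospSigma n Y := by
  funext p q
  have : (X + Y) = fun p q => X p q + Y p q := rfl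
  rcases p with i | k | k <;> rcases q with j | m | m <;>
    simp [ospSigma, Matrix.add_apply, map_add] <;> (try split_ifs) <;> (try ring)

lemma sigma_smul (z : ℂ) (X : Matrix (I n) (I n) ℂ) :
    ospSigma n (z • X) = (starRingEnd ℂ z) • ospSigma n X := by
  funext p q
  rcases p with i | k | k <;> rcases q with j | m | m <;>
    simp [ospSigma, Matrix.smul_apply, smul_eq_mul, map_mul] <;> (try split_ifs) <;> (try ring)

lemma sigma_even (X : Matrix (I n) (I n) ℂ) (h : IsEvenM n X) :
    IsEvenM n (ospSigma n X) := by
  constructor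
  · intro i k; rcases k with j | j <;> simp [ospSigma, h.1, h.2]
  · intro k i; rcases k with j | j <;> simp [ospSigma, h.1, h.2]

lemma sigma_odd (X : Matrix (I n) (I n) ℂ) (h : IsOddM n X) :
    IsOddM n (ospSigma n X) := by
  constructor
  · intro i j; simp [ospSigma, h.1, h.2]
  · intro k l; rcases k with j | j <;> rcases l with m | m <;> simp [ospSigma, h.1, h.2]

lemma sigma'_sub (X Y : Matrix (I n) (I n) ℂ) :
    sigma' n (X - Y) = sigma' n X - sigma' n Y := by
  funext p q
  simp [sigma', Matrix.sub_apply, map_sub]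
  ring

lemma sigma'_addl (X Y : Matrix (I n) (I n) ℂ) :
    sigma' n (X + Y) = sigma' n X + sigma' n Y := by
  funext p q
  simp [sigma', Matrix.add_apply, map_add]
  ring

/-- the map σ of formula (6.6) preserves `osp(2|2(n-1))`, is
antilinear and parity-preserving, satisfies `σ² = id` on `osp(2|2(n-1))`, and
preserves the super Lie bracket `[X,Y] = XY - (-1)^{|X||Y|}YX`; i.e. σ is a
standard real structure on `osp(2|2(n-1))`. -/
theorem ospSigma_standard_real_structure :
    (∀ X, InOsp n X → InOsp n (ospSigma n X)) ∧
    (∀ X Y, ospSigma n (X + Y) = ospSigma n X + ospSigma n Y) ∧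
    (∀ (z : ℂ) X, ospSigma n (z • X) = (starRingEnd ℂ z) • ospSigma n X) ∧
    (∀ X, IsEvenM n X → IsEvenM n (ospSigma n X)) ∧
    (∀ X, IsOddM n X → IsOddM n (ospSigma n X)) ∧
    (∀ X, InOsp n X → ospSigma n (ospSigma n X) = X) ∧
    (∀ X Y, InOsp n X → InOsp n Y → IsEvenM n X → IsEvenM n Y →
      ospSigma n (X * Y - Y * X) =
        ospSigma n X * ospSigma n Y - ospSigma n Y * ospSigma n X) ∧
    (∀ X Y, InOsp n X → InOsp n Y → IsEvenM n X → IsOddM n Y →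
      ospSigma n (X * Y - Y * X) =
        ospSigma n X * ospSigma n Y - ospSigma n Y * ospSigma n X) ∧
    (∀ X Y, InOsp n X → InOsp n Y → IsOddM n X → IsEvenM n Y →
      ospSigma n (X * Y - Y * X) =
        ospSigma n X * ospSigma n Y - ospSigma n Y * ospSigma n X) ∧
    (∀ X Y, InOsp n X → InOsp n Y → IsOddM n X → IsOddM n Y →
      ospSigma n (X * Y + Y * X) =
        ospSigma n X * ospSigma n Y + ospSigma n Y * ospSigma n X) := by
  refine ⟨osp_sigma n, sigma_add n, sigma_smul n, sigma_even n, sigma_odd n, ?_, ?_, ?_, ?_, ?_⟩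
  · intro X hX
    rw [sigma_eq n _ (osp_sigma n X hX), sigma_eq n X hX, sigma'_invol]
  · intro X Y hX hY heX heY
    rw [sigma_eq n _ (closure_ee n hX hY heX heY), sigma_eq n X hX, sigma_eq n Y hY,
      sigma'_sub, sigma'_mul, sigma'_mul]
  · intro X Y hX hY heX hoY
    rw [sigma_eq n _ (closure_eo n hX hY heX hoY), sigma_eq n X hX, sigma_eq n Y hY,
      sigma'_sub, sigma'_mul, sigma'_mul]
  · intro X Y hX hY hoX heY
    rw [sigma_eq n _ (closure_oe n hX hY hoX heY), sigma_eq n X hX, sigma_eq n Y hY,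
      sigma'_sub, sigma'_mul, sigma'_mul]
  · intro X Y hX hY hoX hoY
    rw [sigma_eq n _ (closure_oo n hX hY hoX hoY), sigma_eq n X hX, sigma_eq n Y hY,
      sigma'_addl, sigma'_mul, sigma'_mul]

end OspReal

end
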